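/- arXiv:2310.05284 — 2 statements merged into one kernel-verified Lean document; each statement's English description precedes it below -/
import Mathlib

section
/- Let n ≥ 3, 1 ≤ k < n/2, and set ξ = exp(2πi/n) ∈ ℂ. For each j ∈ {0,…,n−1} let v_j = (1, ξ^j, ξ^{2j}, …, ξ^{(n−1)j}) ∈ ℂ^n. Then C_{n,k} · v_j = λ_j · v_j, where λ_j = ∑_{ℓ=1}^{k} (ξ^{jℓ} − ξ^{−jℓ}); moreover λ_j = 0 if and only if n divides jk or n divides j(k+1). -/
open BigOperators Matrix

/-- The vector `r(l) ∈ ℂ^n`: `r(l)_0 = 0`, `r(l)_m = 1` for `1 ≤ m ≤ l`,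
`r(l)_m = −1` for `n − l ≤ m ≤ n−1`, and `r(l)_m = 0` otherwise. -/
def rVec (n l m : ℕ) : ℂ :=
  if m = 0 then 0 else if m ≤ l then 1 else if n - l ≤ m then -1 else 0

/-- The matrix `C_{n,k}`, whose `i`-th row is `T^i(r(k))`;
equivalently `(C_{n,k})_{ij} = r(k)_{(j−i) mod n}`. -/
def Cnk (n k : ℕ) : Matrix (Fin n) (Fin n) ℂ :=
  Matrix.of fun i j => rVec n k ((j.val + n - i.val) % n)

/-- `ξ = exp(2πi/n)`. -/
noncomputable def xi (n : ℕ) : ℂ := Complex.exp (2 * Real.pi * Complex.I / n)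

/-- The vector `v_j = (1, ξ^j, ξ^{2j}, …, ξ^{(n−1)j})`. -/
noncomputable def eigvec (n : ℕ) (j : Fin n) : Fin n → ℂ := fun m => xi n ^ (m.val * j.val)

/-- The eigenvalue `λ_j = ∑_{ℓ=1}^{k} (ξ^{jℓ} − ξ^{−jℓ})`. -/
noncomputable def eigval (n k : ℕ) (j : Fin n) : ℂ :=
  ∑ l ∈ Finset.Icc 1 k, (xi n ^ ((j.val : ℤ) * l) - xi n ^ (-((j.val : ℤ) * l)))

/-!
`C_{n,k}` is the transpose of the circulant matrix with first column `r(k)`, so every Fourier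
vector `m ↦ ζ^m` with `ζ^n = 1` is an eigenvector, with eigenvalue `∑_m r(k)_m ζ^m`; since
`r(k)` is odd this is `∑_{l=1}^k (ζ^l - ζ^{-l})`. For `z ≠ 0` one has the factorisation
`z^k (z - 1) ∑_{l=1}^k (z^l - z^{-l}) = (z^{k+1} - 1)(z^k - 1)`, so for `z = ξ^j ≠ 1` the
eigenvalue vanishes iff `z^k = 1` or `z^{k+1} = 1`, i.e. iff `n ∣ jk` or `n ∣ j(k+1)`; when
`z = 1` both sides hold trivially.
-/

open Finset

section Circulant

variable {R : Type*} [CommSemiring R] {n : ℕ} [NeZero n]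

theorem transpose_circulant_mulVec_pow (c : Fin n → R) {ζ : R} (hζ : ζ ^ n = 1) :
    (circulant c)ᵀ *ᵥ (fun m : Fin n => ζ ^ (m : ℕ)) =
      (∑ l, c l * ζ ^ (l : ℕ)) • fun m : Fin n => ζ ^ (m : ℕ) := by
  ext i
  simp only [mulVec, dotProduct, transpose_apply, circulant_apply, Pi.smul_apply, smul_eq_mul]
  rw [← Equiv.sum_comp (Equiv.addRight i), sum_mul]
  refine sum_congr rfl fun l _ => ?_
  rw [Equiv.coe_addRight, add_sub_cancel_right, Fin.val_add, ← pow_eq_pow_mod _ hζ, pow_add,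
    mul_assoc]

end Circulant

theorem pow_sub_eq_zpow_neg {G₀ : Type*} [GroupWithZero G₀] {ζ : G₀} {n l : ℕ} (hζ : ζ ^ n = 1)
    (hl : l ≤ n) : ζ ^ (n - l) = ζ ^ (-(l : ℤ)) := by
  rw [_root_.zpow_neg, zpow_natCast]
  exact eq_inv_of_mul_eq_one_left (by rw [← pow_add, Nat.sub_add_cancel hl, hζ])

theorem mul_sum_Icc_zpow_sub_zpow_neg {K : Type*} [Field K] {z : K} (hz : z ≠ 0) (k : ℕ) :
    z ^ k * (z - 1) * ∑ l ∈ Icc 1 k, (z ^ (l : ℤ) - z ^ (-(l : ℤ))) =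
      (z ^ (k + 1) - 1) * (z ^ k - 1) := by
  induction k with
  | zero => simp
  | succ k ih =>
    rw [sum_Icc_succ_top (by omega), _root_.zpow_neg, zpow_natCast]
    have hinv : z ^ (k + 1) * (z ^ (k + 1))⁻¹ = 1 := mul_inv_cancel₀ (pow_ne_zero _ hz)
    linear_combination z * ih - (z - 1) * hinv

theorem sum_Icc_zpow_sub_zpow_neg_eq_zero_iff {K : Type*} [Field K] {z : K} (hz : z ≠ 0)
    (k : ℕ) : ∑ l ∈ Icc 1 k, (z ^ (l : ℤ) - z ^ (-(l : ℤ))) = 0 ↔ z ^ k = 1 ∨ z ^ (k + 1) = 1 := by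
  rcases eq_or_ne z 1 with rfl | hz1
  · simp
  have hfactor : z ^ k * (z - 1) ≠ 0 := mul_ne_zero (pow_ne_zero _ hz) (sub_ne_zero.mpr hz1)
  rw [← mul_eq_zero_iff_left hfactor, mul_sum_Icc_zpow_sub_zpow_neg hz, mul_eq_zero,
    sub_eq_zero, sub_eq_zero, or_comm]

section rVec

variable {n k m : ℕ}

theorem rVec_eq_one (h0 : 0 < m) (hm : m ≤ k) : rVec n k m = 1 := by
  simp [rVec, h0.ne', hm]

theorem rVec_eq_neg_one (hm : k < m) (hnm : n - k ≤ m) : rVec n k m = -1 := by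
  simp [rVec, hnm, hm.not_ge, (k.zero_le.trans_lt hm).ne']

theorem rVec_eq_zero (hm : k < m) (hnm : m < n - k) : rVec n k m = 0 := by
  simp [rVec, hm.not_ge, hnm.not_ge]

theorem sum_range_rVec_mul (f : ℕ → ℂ) (hk : 2 * k < n) :
    ∑ m ∈ range n, rVec n k m * f m = ∑ l ∈ Icc 1 k, (f l - f (n - l)) := by
  have hsupp : Icc 1 k ∪ Icc (n - k) (n - 1) ⊆ range n := by
    intro m; simp only [mem_union, mem_Icc, mem_range]; omega
  have hdisj : Disjoint (Icc 1 k) (Icc (n - k) (n - 1)) := by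
    rw [disjoint_left]; intro m; simp only [mem_Icc]; omega
  calc ∑ m ∈ range n, rVec n k m * f m
      = ∑ m ∈ Icc 1 k ∪ Icc (n - k) (n - 1), rVec n k m * f m := by
        refine (sum_subset hsupp fun m hm hm' => ?_).symm
        simp only [mem_union, mem_Icc, mem_range] at hm hm'
        rcases Nat.eq_zero_or_pos m with rfl | h0
        · simp [rVec]
        · rw [rVec_eq_zero (by omega) (by omega), zero_mul]
    _ = ∑ m ∈ Icc 1 k, f m + ∑ m ∈ Icc (n - k) (n - 1), -f m := by
        rw [sum_union hdisj]
        congr 1 <;> refine sum_congr rfl fun m hm => ?_ <;> rw [mem_Icc] at hm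
        · rw [rVec_eq_one (by omega) hm.2, one_mul]
        · rw [rVec_eq_neg_one (by omega) hm.1, neg_one_mul]
    _ = ∑ l ∈ Icc 1 k, f l + ∑ l ∈ Icc 1 k, -f (n - l) := by
        congr 1
        refine sum_nbij' (n - ·) (n - ·) ?_ ?_ ?_ ?_ ?_ <;> intro m hm <;>
          simp only [mem_Icc] at hm ⊢ <;> first | omega | congr 2; omega
    _ = ∑ l ∈ Icc 1 k, (f l - f (n - l)) := by
        rw [← sum_add_distrib]; simp only [sub_eq_add_neg]

theorem sum_rVec_mul_pow {ζ : ℂ} (hζ : ζ ^ n = 1) (hk : 2 * k < n) :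
    ∑ l : Fin n, rVec n k l * ζ ^ (l : ℕ) = ∑ l ∈ Icc 1 k, (ζ ^ (l : ℤ) - ζ ^ (-(l : ℤ))) := by
  rw [Fin.sum_univ_eq_sum_range (fun m => rVec n k m * ζ ^ m), sum_range_rVec_mul _ hk]
  refine sum_congr rfl fun l hl => ?_
  rw [zpow_natCast, pow_sub_eq_zpow_neg hζ (by rw [mem_Icc] at hl; omega)]

end rVec

theorem Cnk_eq_transpose_circulant (n k : ℕ) :
    Cnk n k = (circulant fun m : Fin n => rVec n k m)ᵀ := by
  ext i j
  simp only [Cnk, of_apply, transpose_apply, circulant_apply, Fin.val_sub]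
  congr 2
  omega

theorem xi_isPrimitiveRoot {n : ℕ} (hn : n ≠ 0) : IsPrimitiveRoot (xi n) n := by
  simpa [xi] using Complex.isPrimitiveRoot_exp n hn

theorem eigvec_eq_pow (n : ℕ) (j : Fin n) :
    eigvec n j = fun m : Fin n => (xi n ^ (j : ℕ)) ^ (m : ℕ) := by
  ext m
  rw [eigvec, ← pow_mul, mul_comm]

theorem eigval_eq_sum_zpow (n k : ℕ) (j : Fin n) :
    eigval n k j =
      ∑ l ∈ Icc 1 k, ((xi n ^ (j : ℕ)) ^ (l : ℤ) - (xi n ^ (j : ℕ)) ^ (-(l : ℤ))) := by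
  simp only [eigval, ← zpow_natCast (xi n), ← _root_.zpow_mul, mul_neg]

theorem Cnk_eigenvectors_general (n k : ℕ) (hk2 : 2 * k < n)
    (j : Fin n) :
    Matrix.mulVec (Cnk n k) (eigvec n j) = eigval n k j • eigvec n j ∧
    (eigval n k j = 0 ↔ (n ∣ j.val * k ∨ n ∣ j.val * (k + 1))) := by
  have hn : n ≠ 0 := j.pos.ne'
  have : NeZero n := ⟨hn⟩
  have hprim := xi_isPrimitiveRoot hn
  set ζ := xi n ^ (j : ℕ)
  have hζn : ζ ^ n = 1 := by rw [← pow_mul, mul_comm, pow_mul, hprim.pow_eq_one, one_pow]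
  have hζ_pow_eq_one (m : ℕ) : ζ ^ m = 1 ↔ n ∣ j * m := by rw [← pow_mul, hprim.pow_eq_one_iff_dvd]
  rw [eigval_eq_sum_zpow, eigvec_eq_pow]
  refine ⟨?_, ?_⟩
  · rw [Cnk_eq_transpose_circulant, transpose_circulant_mulVec_pow _ hζn, sum_rVec_mul_pow hζn hk2]
  · rw [sum_Icc_zpow_sub_zpow_neg_eq_zero_iff (pow_ne_zero _ (hprim.ne_zero hn)), hζ_pow_eq_one,
      hζ_pow_eq_one]

/-- Each `v_j` is an eigenvector of `C_{n,k}` with eigenvalue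
`λ_j = ∑_{ℓ=1}^{k} (ξ^{jℓ} − ξ^{−jℓ})`, and `λ_j = 0` if and only if
`n ∣ jk` or `n ∣ j(k+1)`. -/
theorem Cnk_eigenvectors (n k : ℕ) (hn : 3 ≤ n) (hk1 : 1 ≤ k) (hk2 : 2 * k < n)
    (j : Fin n) :
    Matrix.mulVec (Cnk n k) (eigvec n j) = eigval n k j • eigvec n j ∧
    (eigval n k j = 0 ↔ (n ∣ j.val * k ∨ n ∣ j.val * (k + 1))) :=
  Cnk_eigenvectors_general n k hk2 j
end

section
/- Let n ≥ 3, 1 ≤ k < n/2, d = gcd(n,k), and suppose d > 1. Let I = (i_0,…,i_{d−1}) be a sequence of zeros and ones with i_0 = 0, and let ρ_0,…,ρ_{n−1} denote the rows of C_{n,k,I}. Then ∑_{j=0}^{n/d − 1} ρ_{dj} = 0 (the zero vector in ℂ^n), and consequently the rank of C_{n,k,I} over ℂ is at most n − 2. -/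
open BigOperators Matrix

/-- The matrix `C_{n,k,I}` for a sequence `I` of zeros and ones of length
`d = gcd(n,k)`: its `i`-th row is `T^i(r(k − I(i mod d)))`. -/
def CnkI (n k : ℕ) (I : ℕ → ℕ) : Matrix (Fin n) (Fin n) ℂ :=
  Matrix.of fun i j => rVec n (k - I (i.val % Nat.gcd n k)) ((j.val + n - i.val) % n)

/-!
Row `i` of `C_{n,k,I}` is the cyclic shift by `i` of `r(l)` with `l = k - I(i mod d)`, so the
sum of the rows whose index lies in a residue class mod `d` is, column by column, a sum of `r(l)`
over a residue class `w` mod `d`. Since `r(l) = ∑_{t=1}^{l} (e_t - e_{-t})`, the latter equals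
`∑_{t=1}^{l} f(t)` for the odd function `f(z) = [z = w] - [-z = w]` on `ℤ/d`. The reflection
`t ↦ l - t` shows `∑_{t=0}^{l} f(t) = 0` as soon as `d ∣ l`, and `f(0) = f(l + 1) = 0` when
`d ∣ l + 1`; as `d ∣ k`, both `l = k` and `l = k - 1` are covered. So the indicators of all `d`
residue classes are independent vectors in the left kernel, and the rank is at most `n - d`.
-/

open Finset

namespace Function.Odd

variable {M : Type*} [AddCommGroup M] [IsAddTorsionFree M] {d : ℕ} {f : ZMod d → M}

theorem sum_range_succ_eq_zero (hf : f.Odd) {l : ℕ} (hl : d ∣ l) :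
    ∑ t ∈ range (l + 1), f t = 0 := by
  rw [← neg_eq_self, ← sum_neg_distrib, ← sum_range_reflect]
  refine sum_congr rfl fun t ht => ?_
  have htl : t ≤ l := Nat.lt_succ_iff.mp (mem_range.mp ht)
  rw [← hf, add_tsub_cancel_right, Nat.cast_sub htl, (ZMod.natCast_eq_zero_iff l d).2 hl,
    zero_sub, neg_neg]

theorem sum_range_eq_zero (hf : f.Odd) {l : ℕ} (hl : d ∣ l ∨ d ∣ l + 1) :
    ∑ t ∈ range l, f (t + 1 : ℕ) = 0 := by
  rcases hl with hl | hl
  · simpa [sum_range_succ', hf.map_zero] using hf.sum_range_succ_eq_zero hl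
  · have := hf.sum_range_succ_eq_zero hl
    rwa [sum_range_succ', sum_range_succ, (ZMod.natCast_eq_zero_iff _ d).2 hl, Nat.cast_zero,
      hf.map_zero, add_zero, add_zero] at this

end Function.Odd

theorem rVec_eq_sum {n l m : ℕ} (hl : 2 * l < n) (hm : m < n) :
    rVec n l m = ∑ t ∈ range l,
      ((if m = t + 1 then 1 else 0) - if m + (t + 1) = n then 1 else 0) := by
  rcases Nat.eq_zero_or_pos m with rfl | hm0
  · rw [rVec, if_pos rfl, eq_comm]
    refine sum_eq_zero fun t ht => ?_
    have := mem_range.mp ht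
    rw [if_neg (by omega), if_neg (by omega), sub_zero]
  · have h1 : ∀ t, m = t + 1 ↔ m - 1 = t := fun t => by omega
    have h2 : ∀ t, m + (t + 1) = n ↔ n - m - 1 = t := fun t => by omega
    simp only [h1, h2, sum_sub_distrib, sum_ite_eq, mem_range, rVec]
    split_ifs <;> first | omega | norm_num

theorem Fin.natCast_val_sub {n d : ℕ} (hdn : d ∣ n) (a b : Fin n) :
    (((a - b : Fin n) : ℕ) : ZMod d) = (a : ℕ) - (b : ℕ) := by
  rw [Fin.val_sub, ← ZMod.natCast_mod, Nat.mod_mod_of_dvd _ hdn, ZMod.natCast_mod, Nat.cast_add,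
    Nat.cast_sub b.isLt.le, (ZMod.natCast_eq_zero_iff n d).2 hdn]
  ring

def residueClass (n d : ℕ) (u : ZMod d) : Finset (Fin n) := {i | ((i : ℕ) : ZMod d) = u}

theorem mem_residueClass {n d : ℕ} {u : ZMod d} {i : Fin n} :
    i ∈ residueClass n d u ↔ ((i : ℕ) : ZMod d) = u := by
  simp [residueClass]

theorem sum_residueClass_sub_left {M : Type*} [AddCommMonoid M] {n d : ℕ} [NeZero n]
    (hdn : d ∣ n) (F : Fin n → M) (c : Fin n) (u : ZMod d) :
    ∑ i ∈ residueClass n d u, F (c - i) = ∑ y ∈ residueClass n d ((c : ℕ) - u), F y := by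
  rw [residueClass, residueClass, sum_filter, sum_filter]
  exact Fintype.sum_equiv (Equiv.subLeft c) _ _ fun i => by simp [Fin.natCast_val_sub hdn]

theorem sum_residueClass_ite_val_eq {R : Type*} [AddCommMonoidWithOne R] {n d : ℕ} (u : ZMod d)
    {a : ℕ} (ha : a < n) :
    ∑ y ∈ residueClass n d u, (if (y : ℕ) = a then (1 : R) else 0) =
      if (a : ZMod d) = u then 1 else 0 := by
  simp [← Fin.ext_iff (b := ⟨a, ha⟩), mem_residueClass]

theorem sum_rVec_residueClass_eq {n d l : ℕ} (hdn : d ∣ n) (hl : 2 * l < n) (w : ZMod d) :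
    ∑ y ∈ residueClass n d w, rVec n l y =
      ∑ t ∈ range l, ((if ((t + 1 : ℕ) : ZMod d) = w then 1 else 0) -
        if -((t + 1 : ℕ) : ZMod d) = w then 1 else 0) := by
  rw [sum_congr rfl fun y _ => rVec_eq_sum hl y.isLt, sum_comm]
  refine sum_congr rfl fun t ht => ?_
  have htn : t + 1 < n := by have := mem_range.mp ht; omega
  have hrefl : ∀ y : Fin n, (y : ℕ) + (t + 1) = n ↔ (y : ℕ) = n - (t + 1) := fun y => by
    omega
  rw [sum_sub_distrib, sum_residueClass_ite_val_eq w htn]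
  simp only [hrefl]
  rw [sum_residueClass_ite_val_eq w (Nat.sub_lt (by omega) t.succ_pos), Nat.cast_sub htn.le,
    (ZMod.natCast_eq_zero_iff n d).2 hdn, zero_sub]

theorem sum_rVec_residueClass_eq_zero {n d l : ℕ} (hdn : d ∣ n) (hl : 2 * l < n)
    (hdl : d ∣ l ∨ d ∣ l + 1) (w : ZMod d) :
    ∑ y ∈ residueClass n d w, rVec n l y = 0 := by
  rw [sum_rVec_residueClass_eq hdn hl w]
  have hodd : Function.Odd fun z : ZMod d =>
      (if z = w then (1 : ℂ) else 0) - if -z = w then 1 else 0 :=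
    fun z => by simp only [neg_neg]; abel
  exact hodd.sum_range_eq_zero hdl

def classIndicator (R : Type*) [Zero R] [One R] (n d : ℕ) (u : ZMod d) : Fin n → R :=
  fun i => if i ∈ residueClass n d u then 1 else 0

theorem classIndicator_vecMul {R m : Type*} [NonAssocSemiring R] {n d : ℕ} (u : ZMod d)
    (A : Matrix (Fin n) m R) :
    classIndicator R n d u ᵥ* A = ∑ i ∈ residueClass n d u, A i := by
  ext j
  simp [vecMul, dotProduct, classIndicator, Finset.sum_apply _ _ A]

theorem linearIndependent_classIndicator {R : Type*} [Ring R] [Nontrivial R] {n d : ℕ} [NeZero d]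
    (hdn : d ≤ n) : LinearIndependent R (classIndicator R n d) := by
  rw [linearIndependent_iff']
  intro s g hsum u hu
  simpa [classIndicator, mem_residueClass, hu] using
    congrFun hsum ⟨u.val, u.val_lt.trans_le hdn⟩

theorem sum_row_mul_eq_classIndicator_zero_vecMul {R m : Type*} [NonAssocSemiring R] {n d : ℕ}
    (hdn : d ∣ n) (hd : 0 < d) (A : Matrix (Fin n) m R) :
    ∑ j : Fin (n / d), A ⟨d * j, lt_of_lt_of_le (mul_lt_mul_of_pos_left j.isLt hd)
      (Nat.mul_div_cancel' hdn).le⟩ = classIndicator R n d 0 ᵥ* A := by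
  rw [classIndicator_vecMul]
  refine sum_bij (fun j _ => ⟨d * j, _⟩) (fun j _ => ?_) (fun j _ j' _ h => ?_) (fun i hi => ?_)
    fun _ _ => rfl
  · simp [mem_residueClass]
  · simpa [Fin.ext_iff, hd.ne'] using h
  · have hdi : d ∣ i := (ZMod.natCast_eq_zero_iff _ _).mp (mem_residueClass.mp hi)
    exact ⟨⟨i / d, Nat.div_lt_div_of_lt_of_dvd hdn i.isLt⟩, mem_univ _,
      Fin.ext (Nat.mul_div_cancel' hdi)⟩

theorem Matrix.rank_add_card_le_of_vecMul_eq_zero {ι m n K : Type*} [Field K] [Fintype ι]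
    [Fintype m] [Fintype n] {v : ι → m → K} (hv : LinearIndependent K v) {A : Matrix m n K}
    (hA : ∀ i, v i ᵥ* A = 0) : A.rank + Fintype.card ι ≤ Fintype.card m := by
  have hmul : Matrix.of v * A = 0 := by
    ext i j
    simpa [mul_apply, vecMul, dotProduct] using congrFun (hA i) j
  have := rank_add_rank_le_card_of_mul_eq_zero hmul
  rw [LinearIndependent.rank_matrix (M := of v) hv] at this
  omega

theorem CnkI_apply {n : ℕ} [NeZero n] (k : ℕ) (I : ℕ → ℕ) (i j : Fin n) :
    CnkI n k I i j = rVec n (k - I (i % Nat.gcd n k)) (j - i : Fin n) := by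
  rw [CnkI, of_apply, Fin.val_sub]
  congr 2
  omega

theorem classIndicator_vecMul_CnkI {n k : ℕ} (hk : 2 * k < n) {I : ℕ → ℕ}
    (hI : ∀ s < Nat.gcd n k, I s ≤ 1) (u : ZMod (Nat.gcd n k)) :
    classIndicator ℂ n (Nat.gcd n k) u ᵥ* CnkI n k I = 0 := by
  have : NeZero n := ⟨by omega⟩
  have : NeZero (Nat.gcd n k) := ⟨(Nat.gcd_pos_of_pos_left k (by omega)).ne'⟩
  have hrow : ∀ i ∈ residueClass n (Nat.gcd n k) u,
      CnkI n k I i = fun c => rVec n (k - I u.val) (c - i : Fin n) := by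
    intro i hi
    ext c
    rw [CnkI_apply, ← mem_residueClass.mp hi, ZMod.val_natCast]
  -- for `k = 0` the truncated `k - 1` is `0`, which `d` divides as well
  have hdl : Nat.gcd n k ∣ k - I u.val ∨ Nat.gcd n k ∣ k - I u.val + 1 := by
    rcases Nat.le_one_iff_eq_zero_or_eq_one.mp (hI u.val u.val_lt) with h | h <;> rw [h]
    · exact Or.inl (Nat.gcd_dvd_right n k)
    · rcases Nat.eq_zero_or_pos k with rfl | hk0
      · exact Or.inl (dvd_zero _)
      · exact Or.inr (by rw [Nat.sub_add_cancel hk0]; exact Nat.gcd_dvd_right n k)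
  rw [classIndicator_vecMul, sum_congr rfl hrow]
  ext c
  rw [Finset.sum_apply, sum_residueClass_sub_left (Nat.gcd_dvd_left n k) (fun y => rVec n _ y)]
  exact sum_rVec_residueClass_eq_zero (Nat.gcd_dvd_left n k) (by omega) hdl _

theorem CnkI_rank_add_gcd_le {n k : ℕ} (hk : 2 * k < n) {I : ℕ → ℕ}
    (hI : ∀ s < Nat.gcd n k, I s ≤ 1) : (CnkI n k I).rank + Nat.gcd n k ≤ n := by
  have : NeZero (Nat.gcd n k) := ⟨(Nat.gcd_pos_of_pos_left k (by omega)).ne'⟩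
  simpa using Matrix.rank_add_card_le_of_vecMul_eq_zero
    (linearIndependent_classIndicator (Nat.gcd_le_left k (by omega)))
    (classIndicator_vecMul_CnkI hk hI)

/-- If `d = gcd(n,k) > 1` and `I` is a sequence of zeros and
ones with `i_0 = 0`, then the rows `ρ_0,…,ρ_{n−1}` of `C_{n,k,I}` satisfy
`∑_{j=0}^{n/d−1} ρ_{dj} = 0`, and consequently `rank C_{n,k,I} ≤ n − 2`. -/
theorem CnkI_rows_relation_and_rank (n k : ℕ)
    (hk2 : 2 * k < n) (hd : 1 < Nat.gcd n k)
    (I : ℕ → ℕ) (hI : ∀ s < Nat.gcd n k, I s ≤ 1) :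
    (∑ j : Fin (n / Nat.gcd n k),
        CnkI n k I ⟨Nat.gcd n k * j.val, by
          exact lt_of_lt_of_le (mul_lt_mul_of_pos_left j.isLt (by omega))
            (Nat.mul_div_cancel' (Nat.gcd_dvd_left n k)).le⟩) = 0 ∧
    (CnkI n k I).rank ≤ n - 2 := by
  refine ⟨?_, ?_⟩
  · rw [sum_row_mul_eq_classIndicator_zero_vecMul (Nat.gcd_dvd_left n k) (by omega)]
    exact classIndicator_vecMul_CnkI hk2 hI 0
  · have := CnkI_rank_add_gcd_le hk2 hI
    omega
end
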